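/- arXiv:nlin/0412018 — 2 statements merged into one kernel-verified Lean document; each statement's English description precedes it below -/
import Mathlib

section
/- For every integer n ≥ 2 and every i ∈ {0,1,...,n}, the function E_{i,1} is given explicitly by E_{i,1}(q,p) = (1/2) Σ_{k=0}^{n−i−1} q^k Σ_{j=k+1}^{n−i} p_j p_{n−i+k−j+1} − (1/2) Σ_{k=1}^{i} q^{n−i+k} Σ_{j=1}^{k} p_{n−i+j} p_{n−i+k−j+1}, where q^0 := 1 and q^m := 0 for m > n. -/
open Matrix

noncomputable section

/-- Phase space ℝ^{2n}: pairs (q, p). -/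
abbrev Phase (n : ℕ) := (Fin n → ℝ) × (Fin n → ℝ)

/-- Extended coordinates: `qext n q m` is `q^m` (1-based), with `q^0 := 1`
and `q^m := 0` for `m < 0` or `m > n`. -/
def qext (n : ℕ) (q : Fin n → ℝ) (m : ℤ) : ℝ :=
  if h : 1 ≤ m ∧ m ≤ (n : ℤ) then q ⟨m.toNat - 1, by omega⟩
  else if m = 0 then 1 else 0

/-- The matrix `L(q)`: first column `-q^j`, superdiagonal `1`, all other entries `0`. -/
def Lmat (n : ℕ) (q : Fin n → ℝ) : Matrix (Fin n) (Fin n) ℝ :=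
  Matrix.of fun j k => if (k : ℕ) = 0 then -q j else if (k : ℕ) = (j : ℕ) + 1 then 1 else 0

/-- The contravariant metric `G(q)` with entries `G^{jk} = q^{j+k-n-1}` (1-based indices). -/
def Gmat (n : ℕ) (q : Fin n → ℝ) : Matrix (Fin n) (Fin n) ℝ :=
  Matrix.of fun j k => qext n q ((j : ℤ) + (k : ℤ) + 1 - (n : ℤ))

/-- The Killing tensors: `K_r = Σ_{k=0}^{r-1} q^k L^{r-1-k}` (so `K_1 = I`). -/
def Kmat (n : ℕ) (q : Fin n → ℝ) (r : ℕ) : Matrix (Fin n) (Fin n) ℝ :=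
  ∑ k ∈ Finset.range r, qext n q (k : ℤ) • (Lmat n q) ^ (r - 1 - k)

/-- `E_{i,r}(q,p) = (1/2) Σ_{l,m} (K_r L^i G)^{lm} p_l p_m`. -/
def Efun (n i r : ℕ) : Phase n → ℝ := fun x =>
  (1 / 2) * ∑ l : Fin n, ∑ m : Fin n,
    (Kmat n x.1 r * (Lmat n x.1) ^ i * Gmat n x.1) l m * x.2 l * x.2 m

/-- Canonical Poisson bracket on `ℝ^{2n}`. -/
def pb (n : ℕ) (f g : Phase n → ℝ) : Phase n → ℝ := fun x =>
  ∑ i : Fin n,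
    (fderiv ℝ f x (Pi.single i 1, 0) * fderiv ℝ g x (0, Pi.single i 1)
      - fderiv ℝ f x (0, Pi.single i 1) * fderiv ℝ g x (Pi.single i 1, 0))

/-- Extended momenta: `pe n p j` is `p_j` (1-based), zero out of range. -/
def pe (n : ℕ) (p : Fin n → ℝ) (j : ℕ) : ℝ :=
  if h : 1 ≤ j ∧ j ≤ n then p ⟨j - 1, by omega⟩ else 0

/-!
`L^i G` is block diagonal for `i ≤ n`: with 0-based indices and `N = n - i`, its upper-left
`N × N` block is the Hankel matrix `q^{a+b+1-N}` and its lower-right `i × i` block is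
`-q^{N+a+b+1}`; this follows by induction on `i`, since left multiplication by `L` shifts rows
up and subtracts `q^{a+1}` times row `0`. Since `q^m` vanishes outside `0 ≤ m ≤ n`, each block
is supported on a triangle, and summing its quadratic form along antidiagonals gives the two
sums of the formula.
-/

open Finset

section Triangle

variable {M : Type*} [AddCommMonoid M]

theorem sum_range_sum_range_eq_sum_lower_antidiagonals (m : ℕ) (g : ℕ → ℕ → M)
    (hg : ∀ a b, m ≤ a + b → g a b = 0) :
    ∑ a ∈ range m, ∑ b ∈ range m, g a b =
      ∑ k ∈ range m, ∑ a ∈ range (k + 1), g a (k - a) := by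
  have hrow : ∀ a ∈ range m, ∑ b ∈ range m, g a b = ∑ k ∈ Ico a m, g a (k - a) := by
    intro a ha
    have htail : ∑ b ∈ Ico (m - a) m, g a b = 0 :=
      sum_eq_zero fun b hb => hg a b (by rw [mem_Ico] at hb; omega)
    rw [← sum_range_add_sum_Ico _ (Nat.sub_le m a), htail, add_zero, sum_Ico_eq_sum_range]
    simp only [Nat.add_sub_cancel_left]
  rw [sum_congr rfl hrow]
  simp only [range_eq_Ico]
  exact sum_Ico_Ico_comm 0 m fun a k => g a (k - a)

theorem sum_range_sum_range_eq_sum_upper_antidiagonals (m : ℕ) (g : ℕ → ℕ → M)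
    (hg : ∀ a b, a + b + 1 < m → g a b = 0) :
    ∑ a ∈ range m, ∑ b ∈ range m, g a b =
      ∑ k ∈ range m, ∑ a ∈ Ico k m, g a (m - 1 + k - a) := by
  have hrow : ∀ a ∈ range m,
      ∑ b ∈ range m, g a b = ∑ k ∈ range (a + 1), g a (m - 1 + k - a) := by
    intro a ha
    rw [mem_range] at ha
    have hhead : ∑ b ∈ range (m - 1 - a), g a b = 0 :=
      sum_eq_zero fun b hb => hg a b (by rw [mem_range] at hb; omega)
    rw [← sum_range_add_sum_Ico _ (show m - 1 - a ≤ m by omega), hhead, zero_add,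
      sum_Ico_eq_sum_range, show m - (m - 1 - a) = a + 1 by omega]
    exact sum_congr rfl fun k _ => by congr 1; omega
  rw [sum_congr rfl hrow]
  simp only [range_eq_Ico]
  exact (sum_Ico_Ico_comm 0 m fun k a => g a (m - 1 + k - a)).symm

lemma sum_Icc_add_one_eq_sum_Ico (f : ℕ → M) (a b : ℕ) :
    ∑ j ∈ Icc (a + 1) b, f j = ∑ j ∈ Ico a b, f (j + 1) := by
  rw [← Ico_add_one_right_eq_Icc, sum_Ico_add']

end Triangle

section BlockHankel

variable {n : ℕ} {q p : Fin n → ℝ}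

lemma qext_of_neg {m : ℤ} (h : m < 0) : qext n q m = 0 := by
  rw [qext, dif_neg (by omega), if_neg (by omega)]

lemma qext_zero : qext n q 0 = 1 := by
  rw [qext, dif_neg (by omega), if_pos rfl]

lemma qext_of_eq_zero {m : ℤ} (h : m = 0) : qext n q m = 1 := by
  rw [h, qext_zero]

lemma qext_of_gt {m : ℤ} (h : (n : ℤ) < m) : qext n q m = 0 := by
  rw [qext, dif_neg (by omega), if_neg (by omega)]

lemma qext_natCast_add_one (l : Fin n) : qext n q ((l : ℕ) + 1) = q l := by
  rw [qext, dif_pos (by omega)]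
  congr 1

lemma pe_natCast_add_one (l : Fin n) : pe n p ((l : ℕ) + 1) = p l := by
  rw [pe, dif_pos (by omega)]
  congr 1

lemma Kmat_one : Kmat n q 1 = 1 := by
  simp [Kmat, qext_zero]

def blockHankelEntry (n i : ℕ) (q : Fin n → ℝ) (a b : ℕ) : ℝ :=
  if a + i < n ∧ b + i < n then qext n q ((a + b + i + 1 : ℕ) - n)
  else if n ≤ a + i ∧ n ≤ b + i then -qext n q ((a + b + i + 1 : ℕ) - n)
  else 0

lemma blockHankelEntry_succ {i a b : ℕ} (hi : i < n) (ha : a < n) (hb : b < n) :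
    -qext n q (a + 1) * blockHankelEntry n i q 0 b
      + (if a + 1 < n then blockHankelEntry n i q (a + 1) b else 0) =
      blockHankelEntry n (i + 1) q a b := by
  -- the blocks shift consistently; the one exceptional entry is `b + i + 1 = n`, the `1` in row `0`
  simp only [blockHankelEntry]
  split_ifs <;> simp (disch := omega) [qext_of_neg, qext_of_gt, qext_of_eq_zero] <;>
    ring_nf <;> (obtain rfl : n = b + i + 1 := by omega) <;> push_cast <;> ring_nf

lemma Lmat_mul_apply (M : Matrix (Fin n) (Fin n) ℝ) (l m : Fin n) :
    (Lmat n q * M) l m =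
      -q l * M ⟨0, l.pos⟩ m + if h : (l : ℕ) + 1 < n then M ⟨l + 1, h⟩ m else 0 := by
  have hL : ∀ k, Lmat n q l k =
      (if k = ⟨0, l.pos⟩ then -q l else 0) + if (k : ℕ) = l + 1 then 1 else 0 := by
    intro k
    simp only [Lmat, of_apply, Fin.ext_iff]
    split_ifs <;> simp_all
  simp only [mul_apply, hL, add_mul, sum_add_distrib, ite_mul, zero_mul, sum_ite_eq', mem_univ,
    if_true]
  split_ifs with h
  · rw [sum_eq_single ⟨l + 1, h⟩] <;> simp +contextual [Fin.ext_iff]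
  · rw [sum_eq_zero fun k _ => if_neg (by omega)]

def blockHankel (n i : ℕ) (q : Fin n → ℝ) : Matrix (Fin n) (Fin n) ℝ :=
  of fun a b => blockHankelEntry n i q a b

lemma blockHankel_apply (i : ℕ) (a b : Fin n) :
    blockHankel n i q a b = blockHankelEntry n i q a b := rfl

lemma Lmat_mul_blockHankel {i : ℕ} (hi : i < n) :
    Lmat n q * blockHankel n i q = blockHankel n (i + 1) q := by
  ext l m
  simp only [Lmat_mul_apply, blockHankel_apply]
  rw [← blockHankelEntry_succ hi l.isLt m.isLt, qext_natCast_add_one]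
  split_ifs <;> rfl

lemma Lmat_pow_mul_Gmat {i : ℕ} (hi : i ≤ n) : Lmat n q ^ i * Gmat n q = blockHankel n i q := by
  induction i with
  | zero =>
    ext a b
    simp [blockHankel, blockHankelEntry, Gmat]
  | succ i ih => rw [pow_succ', Matrix.mul_assoc, ih (by omega), Lmat_mul_blockHankel (by omega)]

lemma sum_qext_upper_block (N : ℕ) (u : ℕ → ℝ) :
    ∑ a ∈ range N, ∑ b ∈ range N, qext n q ((a + b + 1 : ℕ) - N) * u (a + 1) * u (b + 1)
      = ∑ k ∈ range N, qext n q k * ∑ j ∈ Icc (k + 1) N, u j * u (N + k - j + 1) := by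
  rw [sum_range_sum_range_eq_sum_upper_antidiagonals N _
    fun a b h => by rw [qext_of_neg (by omega), zero_mul, zero_mul]]
  refine sum_congr rfl fun k hk => ?_
  rw [sum_Icc_add_one_eq_sum_Ico, mul_sum]
  refine sum_congr rfl fun a ha => ?_
  rw [mem_range] at hk
  rw [mem_Ico] at ha
  rw [show ((a + (N - 1 + k - a) + 1 : ℕ) : ℤ) - N = k by omega,
    show N + k - (a + 1) + 1 = N - 1 + k - a + 1 by omega, mul_assoc]

lemma sum_qext_lower_block {N m : ℕ} (hn : N + m = n) (u : ℕ → ℝ) :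
    ∑ a ∈ range m, ∑ b ∈ range m,
        qext n q ((N + a + b + 1 : ℕ) : ℤ) * u (N + a + 1) * u (N + b + 1)
      = ∑ k ∈ Icc 1 m, qext n q ((N + k : ℕ) : ℤ) *
          ∑ j ∈ Icc 1 k, u (N + j) * u (N + k - j + 1) := by
  rw [sum_range_sum_range_eq_sum_lower_antidiagonals m _
    fun a b h => by rw [qext_of_gt (by omega), zero_mul, zero_mul],
    sum_Icc_add_one_eq_sum_Ico, ← range_eq_Ico]
  refine sum_congr rfl fun k hk => ?_
  rw [sum_Icc_add_one_eq_sum_Ico, mul_sum, ← range_eq_Ico]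
  refine sum_congr rfl fun a ha => ?_
  rw [mem_range] at ha
  rw [show N + a + (k - a) + 1 = N + (k + 1) by omega,
    show N + (k + 1) - (a + 1) + 1 = N + (k - a) + 1 by omega, mul_assoc, add_assoc N a]

lemma sum_blockHankelEntry_mul {i : ℕ} (hi : i ≤ n) (u : ℕ → ℝ) :
    ∑ a ∈ range n, ∑ b ∈ range n, blockHankelEntry n i q a b * u (a + 1) * u (b + 1) =
      ∑ a ∈ range (n - i), ∑ b ∈ range (n - i),
          qext n q ((a + b + 1 : ℕ) - (n - i : ℕ)) * u (a + 1) * u (b + 1)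
        - ∑ a ∈ range i, ∑ b ∈ range i,
          qext n q ((n - i + a + b + 1 : ℕ) : ℤ) * u (n - i + a + 1) * u (n - i + b + 1) := by
  obtain ⟨N, rfl⟩ : ∃ N, n = N + i := ⟨n - i, by omega⟩
  simp only [Nat.add_sub_cancel, sum_range_add, sum_add_distrib]
  have hUL : ∀ a ∈ range N, ∀ b ∈ range N, blockHankelEntry (N + i) i q a b =
      qext (N + i) q ((a + b + 1 : ℕ) - N) := by
    intro a ha b hb
    rw [mem_range] at ha hb
    rw [blockHankelEntry, if_pos (by omega)]
    congr 1
    push_cast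
    ring
  have hUR : ∀ a ∈ range N, ∀ b ∈ range i, blockHankelEntry (N + i) i q a (N + b) = 0 := by
    intro a ha b hb
    rw [mem_range] at ha hb
    rw [blockHankelEntry, if_neg (by omega), if_neg (by omega)]
  have hLL : ∀ a ∈ range i, ∀ b ∈ range N, blockHankelEntry (N + i) i q (N + a) b = 0 := by
    intro a ha b hb
    rw [mem_range] at ha hb
    rw [blockHankelEntry, if_neg (by omega), if_neg (by omega)]
  have hLR : ∀ a ∈ range i, ∀ b ∈ range i, blockHankelEntry (N + i) i q (N + a) (N + b) =
      -qext (N + i) q ((N + a + b + 1 : ℕ) : ℤ) := by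
    intro a ha b hb
    rw [mem_range] at ha hb
    rw [blockHankelEntry, if_neg (by omega), if_pos (by omega)]
    congr 2
    push_cast
    ring
  simp +contextual only [hUL, hUR, hLL, hLR, zero_mul, sum_const_zero, add_zero, zero_add,
    neg_mul, sum_neg_distrib, sub_eq_add_neg]

lemma Efun_one_eq_sum_blockHankelEntry {i : ℕ} (hi : i ≤ n) (x : Phase n) :
    Efun n i 1 x = 1 / 2 * ∑ a ∈ range n, ∑ b ∈ range n,
      blockHankelEntry n i x.1 a b * pe n x.2 (a + 1) * pe n x.2 (b + 1) := by
  have hp : ∀ l : Fin n, x.2 l = pe n x.2 ((l : ℕ) + 1) := fun l => (pe_natCast_add_one l).symm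
  simp only [Efun, Kmat_one, one_mul, Lmat_pow_mul_Gmat hi, hp]
  rw [← Fin.sum_univ_eq_sum_range]
  refine congrArg _ (sum_congr rfl fun a _ => ?_)
  rw [← Fin.sum_univ_eq_sum_range]
  rfl

end BlockHankel

theorem Efun_i_one_explicit_general (n : ℕ) (i : ℕ) (hi : i ≤ n) (x : Phase n) :
    Efun n i 1 x =
      (1 / 2) * (∑ k ∈ Finset.range (n - i), qext n x.1 (k : ℤ) *
          ∑ j ∈ Finset.Icc (k + 1) (n - i), pe n x.2 j * pe n x.2 (n - i + k - j + 1))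
      - (1 / 2) * (∑ k ∈ Finset.Icc 1 i, qext n x.1 ((n - i + k : ℕ) : ℤ) *
          ∑ j ∈ Finset.Icc 1 k, pe n x.2 (n - i + j) * pe n x.2 (n - i + k - j + 1)) := by
  rw [Efun_one_eq_sum_blockHankelEntry hi, sum_blockHankelEntry_mul hi, sum_qext_upper_block,
    sum_qext_lower_block (Nat.sub_add_cancel hi), mul_sub]

/-- for `0 ≤ i ≤ n`, the explicit formula
`E_{i,1} = (1/2) Σ_{k=0}^{n−i−1} q^k Σ_{j=k+1}^{n−i} p_j p_{n−i+k−j+1}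
 − (1/2) Σ_{k=1}^{i} q^{n−i+k} Σ_{j=1}^{k} p_{n−i+j} p_{n−i+k−j+1}`. -/
theorem Efun_i_one_explicit (n : ℕ) (hn : 2 ≤ n) (i : ℕ) (hi : i ≤ n) (x : Phase n) :
    Efun n i 1 x =
      (1 / 2) * (∑ k ∈ Finset.range (n - i), qext n x.1 (k : ℤ) *
          ∑ j ∈ Finset.Icc (k + 1) (n - i), pe n x.2 j * pe n x.2 (n - i + k - j + 1))
      - (1 / 2) * (∑ k ∈ Finset.Icc 1 i, qext n x.1 ((n - i + k : ℕ) : ℤ) *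
          ∑ j ∈ Finset.Icc 1 k, pe n x.2 (n - i + j) * pe n x.2 (n - i + k - j + 1)) :=
  Efun_i_one_explicit_general n i hi x
end
end

section
/- For every integer n ≥ 2, every j ∈ {1,...,n}, and every integer m with j−n ≤ m ≤ j−1, the basic separable potential V_1^{(m)} is independent of the coordinate q^j, i.e. ∂V_1^{(m)}/∂q^j = 0 (identically on ℝ^n for m ≥ 0, and on the open set {q^n ≠ 0} for m < 0). -/
/-!
Unwinding the recursions, `V_r^{(m)}` (`m ≥ 0`) is a polynomial in `q^1, …, q^{m+r-1}` and
`V_r^{(-m)}` a rational function of `q^{r-m}, …, q^{r-1}` and `q^{n-m+1}, …, q^n`; for `r = 1`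
the bounds on `m` keep `q^j` out of both lists. A function unchanged by moving `q^j` has zero
derivative in that direction. The invariance also holds at the points `q^n = 0`, where the
divisions by `q^n` return the junk value `0`, and there the derivative is `0` as well.
-/

open Matrix

noncomputable section

/-- Basic separable potentials `V_r^{(m)}` for `m ≥ 0` (first argument is `m`,
second is the 1-based index `r`): `V_r^{(0)} = 0`, `V_r^{(1)} = -q^r`,
`V_r^{(m+1)} = V_{r+1}^{(m)} + V_r^{(1)} V_1^{(m)}`. -/
def Vpos (n : ℕ) (q : Fin n → ℝ) : ℕ → ℕ → ℝ
  | 0, _ => 0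
  | 1, r => -qext n q (r : ℤ)
  | (m + 2), r => Vpos n q (m + 1) (r + 1) + (-qext n q (r : ℤ)) * Vpos n q (m + 1) 1

/-- Basic separable potentials `V_r^{(-m)}` (first argument is `m ≥ 0`, second the
1-based index `r`, with the convention `V_0^{(-m)} = 0`): `V_r^{(-1)} = -q^{r-1}/q^n`,
`V_r^{(-m-1)} = V_{r-1}^{(-m)} + V_r^{(-1)} V_n^{(-m)}`. -/
def Vneg (n : ℕ) (q : Fin n → ℝ) : ℕ → ℕ → ℝ
  | 0, _ => 0
  | 1, r => if r = 0 then 0 else -qext n q ((r : ℤ) - 1) / qext n q (n : ℤ)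
  | (m + 2), r => if r = 0 then 0 else
      Vneg n q (m + 1) (r - 1) + (-qext n q ((r : ℤ) - 1) / qext n q (n : ℤ)) * Vneg n q (m + 1) n

/-- `V_r^{(k)}` for arbitrary integer `k`. -/
def Vk (n : ℕ) (q : Fin n → ℝ) (k : ℤ) (r : ℕ) : ℝ :=
  if 0 ≤ k then Vpos n q k.toNat r else Vneg n q (-k).toNat r

/-- `H_{i,r}^{(k)} = E_{i,r} + V_r^{(k)}`. -/
def Hfun (n i r : ℕ) (k : ℤ) : Phase n → ℝ := fun x => Efun n i r x + Vk n x.1 k r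

theorem fderiv_apply_eq_zero_of_forall_add_smul {𝕜 E F : Type*} [NontriviallyNormedField 𝕜]
    [NormedAddCommGroup E] [NormedSpace 𝕜 E] [NormedAddCommGroup F] [NormedSpace 𝕜 F]
    {f : E → F} {x v : E} (hf : ∀ t : 𝕜, f (x + t • v) = f x) : fderiv 𝕜 f x v = 0 := by
  by_cases hd : DifferentiableAt 𝕜 f x
  · rw [← hd.lineDeriv_eq_fderiv, lineDeriv, funext hf, deriv_const]
  · rw [fderiv_zero_of_not_differentiableAt hd]
    rfl

theorem fderiv_apply_single_eq_zero_of_forall_update {𝕜 ι F : Type*} [NontriviallyNormedField 𝕜]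
    [Fintype ι] [DecidableEq ι] [NormedAddCommGroup F] [NormedSpace 𝕜 F]
    {f : (ι → 𝕜) → F} {i : ι} (hf : ∀ x t, f (Function.update x i t) = f x) (x : ι → 𝕜) :
    fderiv 𝕜 f x (Pi.single i 1) = 0 := by
  refine fderiv_apply_eq_zero_of_forall_add_smul fun t => ?_
  have hline : x + t • Pi.single i 1 = Function.update x i (x i + t) := by
    ext k
    by_cases hk : k = i
    · subst hk; simp
    · simp [hk]
  rw [hline, hf]

section

variable {n : ℕ}

theorem qext_update (q : Fin n → ℝ) (i : Fin n) (t : ℝ) {k : ℤ} (hk : k ≠ (i : ℕ) + 1) :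
    qext n (Function.update q i t) k = qext n q k := by
  unfold qext
  split_ifs with h
  · refine Function.update_of_ne (fun hki => hk ?_) _ _
    rw [Fin.ext_iff] at hki
    simp only at hki
    omega
  all_goals rfl

theorem Vpos_update (q : Fin n → ℝ) (i : Fin n) (t : ℝ) {m r : ℕ} (h : m + r ≤ (i : ℕ) + 1) :
    Vpos n (Function.update q i t) m r = Vpos n q m r := by
  induction m generalizing r with
  | zero => rfl
  | succ m ih =>
    cases m with
    | zero => simp only [Vpos, qext_update q i t (k := r) (by omega)]
    | succ m =>
      simp only [Vpos, ih (r := r + 1) (by omega), ih (r := 1) (by omega),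
        qext_update q i t (k := r) (by omega)]

theorem Vneg_update (q : Fin n → ℝ) (i : Fin n) (t : ℝ) {m r : ℕ}
    (h : ((i : ℤ) + 1 < r - m ∨ r ≤ (i : ℤ) + 1) ∧ (i : ℤ) + 1 ≤ n - m) :
    Vneg n (Function.update q i t) m r = Vneg n q m r := by
  induction m generalizing r with
  | zero => rfl
  | succ m ih =>
    have hqn := qext_update q i t (k := n) (by omega)
    rcases Nat.eq_zero_or_pos r with rfl | hr
    · cases m <;> simp only [Vneg, if_true]
    have hqr := qext_update q i t (k := (r : ℤ) - 1) (by omega)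
    cases m with
    | zero => simp only [Vneg, hqr, hqn]
    | succ m =>
      simp only [Vneg, hqr, hqn, ih (r := r - 1) (by omega), ih (r := n) (by omega)]

end

/-- for `j ∈ {1,…,n}` and any integer `m` with `j−n ≤ m ≤ j−1`, the basic
separable potential `V_1^{(m)}` is independent of `q^j`: `∂V_1^{(m)}/∂q^j = 0`,
identically on `ℝ^n` for `m ≥ 0` and on the open set `{q^n ≠ 0}` for `m < 0`. -/
theorem V1_independent_of_qj (n : ℕ) (j : ℕ) (hj1 : 1 ≤ j) (hjn : j ≤ n)
    (m : ℤ) (hm1 : (j : ℤ) - n ≤ m) (hm2 : m ≤ (j : ℤ) - 1)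
    (q : Fin n → ℝ) :
    fderiv ℝ (fun q' => Vk n q' m 1) q (Pi.single ⟨j - 1, by omega⟩ 1) = 0 := by
  refine fderiv_apply_single_eq_zero_of_forall_update (fun x t => ?_) q
  unfold Vk
  split_ifs with hm
  · exact Vpos_update x _ t (by simp only; omega)
  · exact Vneg_update x _ t (by simp only; omega)
end
end
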